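/- arXiv:1707.02002 — 2 statements merged into one kernel-verified Lean document; each statement's English description precedes it below -/
import Mathlib

section
/- Let T be a tree with m edges and x a vertex of T. Then the weighted centrality D^w(x) = Σ_{y∈V(T)} deg(y)·d(x,y) satisfies D^w(x) = 2·D(x) − m, where D(x) = Σ_{y∈V(T)} d(x,y) is the centrality of x. -/
/-! Summing `deg(y)·d(x,y)` edge by edge, an edge `uv` contributes `d(x,u) + d(x,v)`. Root the
tree at `x`: every `y ≠ x` has a neighbour `p(y)` one step closer to `x`, and `y ↦ yp(y)` is
injective, hence a bijection onto the `|V| - 1` edges. The edge `yp(y)` contributes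
`2·d(x,y) - 1`, and summing over `y ≠ x` gives `2·D(x) - m`. -/

open SimpleGraph Finset

attribute [local instance] Classical.propDecidable

variable {V : Type*}

/-- Degree of a vertex as a real number. -/
noncomputable def degR [Fintype V] (G : SimpleGraph V) (x : V) : ℝ :=
  ((Finset.univ.filter fun y => G.Adj x y).card : ℝ)

/-- Number of edges of a graph. -/
noncomputable def esize (G : SimpleGraph V) : ℕ := Nat.card G.edgeSet

/-- Dirichlet energy of a potential. -/
noncomputable def energyFn [Fintype V] (G : SimpleGraph V) (φ : V → ℝ) : ℝ :=
  (1/2) * ∑ u, ∑ v, if G.Adj u v then (φ u - φ v)^2 else 0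

/-- Effective resistance between two vertices (unit resistors on edges),
via the Dirichlet variational principle: the reciprocal of the minimal energy
of a potential with value 1 at `x` and 0 at `y`. -/
noncomputable def eres [Fintype V] (G : SimpleGraph V) (x y : V) : ℝ :=
  (sInf {e : ℝ | ∃ φ : V → ℝ, φ x = 1 ∧ φ y = 0 ∧ e = energyFn G φ})⁻¹

/-- The transition matrix of the simple random walk, killed at `y`. -/
noncomputable def hitMat [Fintype V] (G : SimpleGraph V) (y : V) : Matrix V V ℝ :=
  Matrix.of fun u v => if v = y then 0 else if G.Adj u v then (degR G u)⁻¹ else 0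

/-- Expected hitting time `H_{xy}` of the simple random walk from `x` to `y`,
expressed as the sum of the survival probabilities of the walk killed at `y`. -/
noncomputable def hitting [Fintype V] (G : SimpleGraph V) (x y : V) : ℝ :=
  if x = y then 0 else ∑' k : ℕ, ∑ z, (hitMat G y ^ k) x z

/-- Resistance-centrality `R(x)`. -/
noncomputable def Rres [Fintype V] (G : SimpleGraph V) (x : V) : ℝ := ∑ y, eres G x y

/-- Weighted resistance-centrality `R^w(x)`. -/
noncomputable def Rw [Fintype V] (G : SimpleGraph V) (x : V) : ℝ :=
  ∑ y, degR G y * eres G x y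

/-- Kirchhoff index `Kf(G)`. -/
noncomputable def Kf [Fintype V] (G : SimpleGraph V) : ℝ :=
  (1/2) * ∑ x, ∑ y, eres G x y

/-- Additive degree-Kirchhoff index `Kf⁺(G)`. -/
noncomputable def KfPlus [Fintype V] (G : SimpleGraph V) : ℝ :=
  (1/2) * ∑ x, ∑ y, (degR G x + degR G y) * eres G x y

/-- Multiplicative degree-Kirchhoff index `Kf*(G)`. -/
noncomputable def KfStar [Fintype V] (G : SimpleGraph V) : ℝ :=
  (1/2) * ∑ x, ∑ y, degR G x * degR G y * eres G x y

/-- Cover cost `CC(x) = Σ_y H_{xy}`. -/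
noncomputable def coverCost [Fintype V] (G : SimpleGraph V) (x : V) : ℝ :=
  ∑ y, hitting G x y

/-- Reverse cover cost `RC(x) = Σ_y H_{yx}`. -/
noncomputable def reverseCoverCost [Fintype V] (G : SimpleGraph V) (x : V) : ℝ :=
  ∑ y, hitting G y x

/-- Centrality (transmission) `D(x) = Σ_y d(x,y)`. -/
noncomputable def Dcent [Fintype V] (G : SimpleGraph V) (x : V) : ℝ :=
  ∑ y, (G.dist x y : ℝ)

/-- Weighted centrality `D^w(x) = Σ_y deg(y)·d(x,y)`. -/
noncomputable def Dw [Fintype V] (G : SimpleGraph V) (x : V) : ℝ :=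
  ∑ y, degR G y * (G.dist x y : ℝ)

/-- Wiener index `W(G)`. -/
noncomputable def Wiener [Fintype V] (G : SimpleGraph V) : ℝ :=
  (1/2) * ∑ x, ∑ y, (G.dist x y : ℝ)

/-- `D_{T}(v)`: sum of distances from `v` to the vertices of its connected
component in `G'` (used for the branch trees of a unicyclic graph). -/
noncomputable def branchD [Fintype V] (G' : SimpleGraph V) (v : V) : ℝ :=
  ∑ u, if G'.Reachable v u then (G'.dist v u : ℝ) else 0

/-- The set of edges of the cycle `c 0 - c 1 - ⋯ - c (l-1) - c 0`. -/
def cycleEdges {l : ℕ} [NeZero l] (c : Fin l → V) : Set (Sym2 V) :=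
  Set.range fun i : Fin l => s(c i, c (i + 1))

/-- Distance from a vertex to a set of vertices. -/
noncomputable def distToSet [Fintype V] (G : SimpleGraph V) (x : V) (s : Set V) : ℕ :=
  sInf {d | ∃ y ∈ s, G.dist x y = d}

/-- `v` is the center of a star. -/
def IsStarCenter (G : SimpleGraph V) (v : V) : Prop := ∀ u, u ≠ v → G.Adj v u

/-- `G` is a star. -/
def IsStar (G : SimpleGraph V) : Prop := ∃ v, IsStarCenter G v

/-- The lollipop graph `P_n^l` : a cycle `C_l` on `0,…,l-1` together with a
path on `l,…,n-1` attached at the cycle vertex `0`. -/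
def lollipop (n l : ℕ) : SimpleGraph (Fin n) :=
  SimpleGraph.fromRel (fun a b =>
    (a.val + 1 = b.val ∧ b.val < l) ∨ (a.val = 0 ∧ b.val = l - 1) ∨
    (a.val = 0 ∧ b.val = l) ∨ (l ≤ a.val ∧ a.val + 1 = b.val))

/-- The graph `S_n^l` : a cycle `C_l` on `0,…,l-1` with `n - l` pendant
vertices `l,…,n-1` attached at the cycle vertex `0`. -/
def starCycle (n l : ℕ) : SimpleGraph (Fin n) :=
  SimpleGraph.fromRel (fun a b =>
    (a.val + 1 = b.val ∧ b.val < l) ∨ (a.val = 0 ∧ b.val = l - 1) ∨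
    (a.val = 0 ∧ l ≤ b.val))

/-- The cycle graph `C_n` on `Fin n`. -/
def cycleG (n : ℕ) : SimpleGraph (Fin n) :=
  SimpleGraph.fromRel (fun a b => a.val + 1 = b.val ∨ (a.val = 0 ∧ b.val = n - 1))

namespace SimpleGraph

variable {G : SimpleGraph V}

lemma Connected.exists_adj_dist_add_one_eq (hG : G.Connected) {x y : V} (hy : y ≠ x) :
    ∃ p, G.Adj y p ∧ G.dist x p + 1 = G.dist x y := by
  obtain ⟨w, hw⟩ := hG.exists_walk_length_eq_dist y x
  have hnil : ¬ w.Nil := Walk.not_nil_of_ne hy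
  refine ⟨w.snd, w.adj_snd hnil, ?_⟩
  have htail : G.dist w.snd x ≤ w.tail.length := dist_le _
  have hlen := w.length_tail_add_one hnil
  have hstep := (w.adj_snd hnil).diff_dist_adj (u := x)
  rw [dist_comm (u := w.snd)] at htail
  rw [dist_comm (u := y)] at hw
  omega

lemma sum_degree_smul_eq_sum_darts [Fintype V] [DecidableRel G.Adj] {M : Type*}
    [AddCommMonoid M] (f : V → M) :
    ∑ v, G.degree v • f v = ∑ d : G.Dart, f d.fst := by
  rw [← sum_fiberwise univ (fun d : G.Dart => d.fst)]
  refine sum_congr rfl fun v _ => ?_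
  rw [sum_congr rfl fun d hd => by rw [(mem_filter.mp hd).2], sum_const]
  congr 1
  convert (G.dart_fst_fiber_card_eq_degree v).symm

lemma sum_darts_eq_sum_edgeFinset [Fintype V] [DecidableRel G.Adj] {M : Type*}
    [AddCommMonoid M] (f : V → M) :
    ∑ d : G.Dart, f d.fst =
      ∑ e ∈ G.edgeFinset, Sym2.lift ⟨fun u v => f u + f v, fun _ _ => add_comm _ _⟩ e := by
  rw [← sum_fiberwise_of_maps_to (g := Dart.edge) (t := G.edgeFinset)
    (fun d _ => mem_edgeFinset.mpr d.edge_mem)]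
  refine sum_congr rfl fun e he => ?_
  induction e using Sym2.ind with
  | h u v =>
    let d : G.Dart := ⟨(u, v), mem_edgeFinset.mp he⟩
    rw [show s(u, v) = d.edge from rfl, d.edge_fiber, sum_pair d.symm_ne.symm]
    rfl

lemma IsTree.sum_edgeFinset_eq_sum_parent_edge [Fintype V] [DecidableRel G.Adj] {M : Type*}
    [AddCommMonoid M] (hG : G.IsTree) {x : V} {par : V → V}
    (hadj : ∀ y ≠ x, G.Adj y (par y)) (hdist : ∀ y ≠ x, G.dist x (par y) + 1 = G.dist x y)
    (g : Sym2 V → M) :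
    ∑ e ∈ G.edgeFinset, g e = ∑ y ∈ univ.erase x, g s(y, par y) := by
  have hinj : Set.InjOn (fun y => s(y, par y)) (univ.erase x) := by
    intro y hy y' hy' h
    have hy := hdist y (ne_of_mem_erase hy)
    have hy' := hdist y' (ne_of_mem_erase hy')
    rcases Sym2.eq_iff.mp h with ⟨h, -⟩ | ⟨h, h'⟩
    · exact h
    · rw [h', h] at hy
      omega
  have himage : (univ.erase x).image (fun y => s(y, par y)) = G.edgeFinset := by
    refine eq_of_subset_of_card_le (fun e he => ?_) ?_
    · obtain ⟨y, hy, rfl⟩ := mem_image.mp he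
      exact mem_edgeFinset.mpr (hadj y (ne_of_mem_erase hy))
    · rw [card_image_of_injOn hinj, card_erase_of_mem (mem_univ x), card_univ,
        ← hG.card_edgeFinset, Nat.add_sub_cancel]
  rw [← himage, sum_image hinj]

end SimpleGraph

lemma degR_eq_degree [Fintype V] (G : SimpleGraph V) [DecidableRel G.Adj] (v : V) :
    degR G v = G.degree v := by
  rw [degR, ← card_neighborFinset_eq_degree]
  congr 2
  ext w
  simp

lemma esize_eq_card_edgeFinset (G : SimpleGraph V) [Fintype G.edgeSet] :
    esize G = #G.edgeFinset := by
  rw [esize, Nat.card_eq_fintype_card, edgeFinset_card]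

/-- For a tree `T` with `m` edges and any vertex `x`,
`D^w(x) = 2·D(x) − m`. -/
theorem weighted_centrality_tree [Fintype V] (T : SimpleGraph V) (hT : T.IsTree)
    (m : ℕ) (hm : esize T = m) (x : V) :
    Dw T x = 2 * Dcent T x - (m : ℝ) := by
  choose! par hadj hdist using fun y (hy : y ≠ x) => hT.connected.exists_adj_dist_add_one_eq hy
  have hcard : m + 1 = Fintype.card V := by
    rw [← hm, esize_eq_card_edgeFinset, hT.card_edgeFinset]
  calc Dw T x
      = ∑ e ∈ T.edgeFinset, Sym2.lift
          ⟨fun u v => (T.dist x u + T.dist x v : ℝ), fun _ _ => add_comm _ _⟩ e := by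
        simp only [Dw, degR_eq_degree, ← nsmul_eq_mul]
        rw [sum_degree_smul_eq_sum_darts]
        exact sum_darts_eq_sum_edgeFinset fun v => (T.dist x v : ℝ)
    _ = ∑ y ∈ univ.erase x, (2 * T.dist x y - 1 : ℝ) := by
        rw [hT.sum_edgeFinset_eq_sum_parent_edge hadj hdist]
        refine sum_congr rfl fun y hy => ?_
        have hpar := congrArg (Nat.cast : ℕ → ℝ) (hdist y (ne_of_mem_erase hy))
        push_cast at hpar
        rw [Sym2.lift_mk]
        linarith
    _ = 2 * Dcent T x - m := by
        rw [sum_sub_distrib, ← mul_sum, sum_erase _ (by simp), sum_const,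
          card_erase_of_mem (mem_univ x), card_univ, ← hcard, Dcent]
        simp
end

section
/- Let G be a connected graph with m edges and x, y ∈ V(G). Then the expected hitting time of the simple random walk satisfies H_{xy} = (1/2)·Σ_{z∈V(G)} deg(z)·(r(x,y) + r(z,y) − r(z,x)) = m·r(x,y) + (1/2)·(R^w(y) − R^w(x)). -/
open SimpleGraph Finset

attribute [local instance] Classical.propDecidable

variable {V : Type*}

/-! Ground `y` and let `g a` be the voltage of a unit current entering at `a` and leaving at `y`:
`L (g a) = e_a - e_y` and `g a y = 0`. The Dirichlet principle gives
`r(a,b) = g a a - g b a - g a b + g b b`, and `g` is symmetric, so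
`r(x,y) + r(z,y) - r(z,x) = 2 g z x`. The potential `h = ∑ₐ deg a • g a` vanishes at `y` and has
`L h = deg` off `y`, i.e. `h = 1 + P h` there, `P` being the walk killed at `y`. As `P` is
substochastic, iterating this identity exhibits `h x` as the sum of the survival probabilities of
the killed walk, which is `H_{xy}`. The second formula is the first rearranged with `∑ deg = 2m`.
-/

open Matrix Filter Topology

namespace Matrix

variable {ι : Type*} [Fintype ι]

lemma abs_mulVec_apply_le {A : Matrix ι ι ℝ} (hA : ∀ i j, 0 ≤ A i j) (v : ι → ℝ) (i : ι) :
    |(A *ᵥ v) i| ≤ ‖v‖ * ∑ j, A i j := by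
  rw [mulVec, dotProduct, mul_sum]
  refine (abs_sum_le_sum_abs _ _).trans (sum_le_sum fun j _ => ?_)
  rw [abs_mul, abs_of_nonneg (hA i j), mul_comm]
  exact mul_le_mul_of_nonneg_right (norm_le_pi_norm v j) (hA i j)

variable [DecidableEq ι] {Q : Matrix ι ι ℝ} (hQ : ∀ i j, 0 ≤ Q i j) (hQ1 : ∀ i, ∑ j, Q i j ≤ 1)
include hQ hQ1

lemma sum_pow_apply_le_one (k : ℕ) (i : ι) : ∑ j, (Q ^ k) i j ≤ 1 := by
  induction k generalizing i with
  | zero => simp [one_apply]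
  | succ k ih =>
    calc ∑ j, (Q ^ (k + 1)) i j = ∑ l, Q i l * ∑ j, (Q ^ k) l j := by
          simp_rw [pow_succ', mul_apply, mul_sum]; exact sum_comm
      _ ≤ ∑ l, Q i l := sum_le_sum fun l _ => mul_le_of_le_one_right (hQ i l) (ih l)
      _ ≤ 1 := hQ1 i

theorem hasSum_sum_pow_apply_of_eq_one_add_mulVec {h : ι → ℝ} (hh : h = 1 + Q *ᵥ h) (i : ι) :
    HasSum (fun k => ∑ j, (Q ^ k) i j) (h i) := by
  set s : ℕ → ℝ := fun k => ∑ j, (Q ^ k) i j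
  have hs0 : ∀ k, 0 ≤ s k := fun k => sum_nonneg fun j _ => pow_apply_nonneg hQ k i j
  have htel : ∀ K, ∑ k ∈ range K, s k = h i - (Q ^ K *ᵥ h) i := by
    intro K
    induction K with
    | zero => simp
    | succ K ih =>
      have hstep : (Q ^ (K + 1) *ᵥ h) i = (Q ^ K *ᵥ h) i - s K := by
        conv_rhs => rw [hh, mulVec_add, mulVec_mulVec, ← pow_succ]
        simp [s, mulVec, dotProduct]
      rw [sum_range_succ, ih, hstep]; ring
  have hrem : ∀ K, |(Q ^ K *ᵥ h) i| ≤ ‖h‖ * s K :=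
    fun K => abs_mulVec_apply_le (pow_apply_nonneg hQ K) h i
  -- no contraction estimate is needed: bounded partial sums already force `Qᵏ 1 → 0`
  have hsum : Summable s := by
    refine summable_of_sum_range_le hs0 (c := h i + ‖h‖) fun K => ?_
    have hK := abs_le.mp (hrem K)
    have hs1 := mul_le_of_le_one_right (norm_nonneg h) (sum_pow_apply_le_one hQ hQ1 K i)
    rw [htel]
    linarith
  have hrem0 : Tendsto (fun K => (Q ^ K *ᵥ h) i) atTop (𝓝 0) :=
    squeeze_zero_norm (fun K => (Real.norm_eq_abs _).trans_le (hrem K))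
      (by simpa using hsum.tendsto_atTop_zero.const_mul ‖h‖)
  rw [hasSum_iff_tendsto_nat_of_nonneg hs0, funext htel]
  simpa using tendsto_const_nhds.sub hrem0

end Matrix

section Laplacian

variable {V : Type*} [Fintype V] {G : SimpleGraph V}

lemma degR_eq_degree_s6 (u : V) : degR G u = G.degree u := by
  rw [degR, ← card_neighborFinset_eq_degree, neighborFinset_eq_filter]

lemma sum_degR : ∑ u, degR G u = 2 * esize G := by
  simp_rw [degR_eq_degree_s6]
  rw [← Nat.cast_sum, sum_degrees_eq_twice_card_edges, esize, Nat.card_eq_fintype_card,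
    ← edgeFinset_card]
  push_cast; ring

lemma energyFn_eq_dotProduct (φ : V → ℝ) : energyFn G φ = φ ⬝ᵥ (G.lapMatrix ℝ *ᵥ φ) := by
  rw [← Matrix.toLinearMap₂'_apply', lapMatrix_toLinearMap₂', energyFn]; ring

lemma energyFn_nonneg (φ : V → ℝ) : 0 ≤ energyFn G φ := by
  unfold energyFn; positivity

lemma energyFn_const_sub (c : ℝ) (φ : V → ℝ) : energyFn G (fun u => c - φ u) = energyFn G φ := by
  unfold energyFn
  congr 1
  refine sum_congr rfl fun u _ => sum_congr rfl fun v _ => ?_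
  congr 1; ring

lemma dotProduct_lapMatrix_mulVec_comm (φ ψ : V → ℝ) :
    φ ⬝ᵥ (G.lapMatrix ℝ *ᵥ ψ) = ψ ⬝ᵥ (G.lapMatrix ℝ *ᵥ φ) := by
  rw [dotProduct_mulVec, ← mulVec_transpose, isSymm_lapMatrix, dotProduct_comm]

lemma energyFn_add (φ ψ : V → ℝ) :
    energyFn G (φ + ψ) = energyFn G φ + 2 * (φ ⬝ᵥ (G.lapMatrix ℝ *ᵥ ψ)) + energyFn G ψ := by
  simp only [energyFn_eq_dotProduct, mulVec_add, add_dotProduct, dotProduct_add,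
    dotProduct_lapMatrix_mulVec_comm ψ φ]
  ring

/-- Dirichlet principle. -/
lemma energyFn_le_of_lapMatrix_mulVec_eq {x y : V} {φ₀ φ : V → ℝ} {c : ℝ}
    (hφ₀ : G.lapMatrix ℝ *ᵥ φ₀ = c • (Pi.single x 1 - Pi.single y 1))
    (hx : φ x = φ₀ x) (hy : φ y = φ₀ y) : energyFn G φ₀ ≤ energyFn G φ := by
  have hcross : (φ - φ₀) ⬝ᵥ (G.lapMatrix ℝ *ᵥ φ₀) = 0 := by
    simp [hφ₀, dotProduct_sub, hx, hy]
  have := energyFn_add (G := G) (φ - φ₀) φ₀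
  rw [sub_add_cancel, hcross] at this
  linarith [energyFn_nonneg (G := G) (φ - φ₀)]

lemma eres_self (x : V) : eres G x x = 0 := by
  have : {e : ℝ | ∃ φ : V → ℝ, φ x = 1 ∧ φ x = 0 ∧ e = energyFn G φ} = ∅ :=
    Set.eq_empty_of_forall_notMem fun _ ⟨_, h1, h0, _⟩ => one_ne_zero (h1.symm.trans h0)
  rw [eres, this, Real.sInf_empty, _root_.inv_zero]

lemma eres_comm (x y : V) : eres G x y = eres G y x := by
  have : ∀ x y : V, {e : ℝ | ∃ φ : V → ℝ, φ x = 1 ∧ φ y = 0 ∧ e = energyFn G φ} ⊆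
      {e : ℝ | ∃ φ : V → ℝ, φ y = 1 ∧ φ x = 0 ∧ e = energyFn G φ} := by
    rintro x y _ ⟨φ, hx, hy, rfl⟩
    exact ⟨fun u => 1 - φ u, by simp [hy], by simp [hx], (energyFn_const_sub 1 φ).symm⟩
  rw [eres, eres, (this x y).antisymm (this y x)]

theorem eres_eq_sub {x y : V} {ψ : V → ℝ}
    (hψ : G.lapMatrix ℝ *ᵥ ψ = Pi.single x 1 - Pi.single y 1) : eres G x y = ψ x - ψ y := by
  rcases eq_or_ne x y with rfl | hxy
  · rw [eres_self, sub_self]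
  set r := ψ x - ψ y
  have hE : energyFn G ψ = r := by
    simp [energyFn_eq_dotProduct, hψ, dotProduct_sub, r]
  have hr : 0 < r := by
    refine lt_of_le_of_ne (hE ▸ energyFn_nonneg ψ) fun hr0 => ?_
    have hψ0 : G.lapMatrix ℝ *ᵥ ψ = 0 :=
      ((posSemidef_lapMatrix ℝ G).dotProduct_mulVec_zero_iff ψ).mp
        (by simpa [energyFn_eq_dotProduct] using hE.trans hr0.symm)
    simpa [hψ, hxy] using congrFun hψ0 x
  set φ₀ : V → ℝ := r⁻¹ • (ψ - ψ y • fun _ => 1)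
  have hLφ₀ : G.lapMatrix ℝ *ᵥ φ₀ = r⁻¹ • (Pi.single x 1 - Pi.single y 1) := by
    rw [mulVec_smul, mulVec_sub, mulVec_smul, lapMatrix_mulVec_const_eq_zero, hψ]; simp
  have hφ₀x : φ₀ x = 1 := by simp [φ₀, r, hr.ne']
  have hφ₀y : φ₀ y = 0 := by simp [φ₀]
  have hEφ₀ : energyFn G φ₀ = r⁻¹ := by
    simp [energyFn_eq_dotProduct, hLφ₀, dotProduct_sub, hφ₀x, hφ₀y]
  have hleast : IsLeast {e : ℝ | ∃ φ : V → ℝ, φ x = 1 ∧ φ y = 0 ∧ e = energyFn G φ} r⁻¹ := by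
    refine ⟨⟨φ₀, hφ₀x, hφ₀y, hEφ₀.symm⟩, ?_⟩
    rintro _ ⟨φ, hx, hy, rfl⟩
    exact hEφ₀ ▸
      energyFn_le_of_lapMatrix_mulVec_eq hLφ₀ (hx.trans hφ₀x.symm) (hy.trans hφ₀y.symm)
  rw [eres, hleast.csInf_eq, inv_inv]

theorem exists_lapMatrix_mulVec_eq (hconn : G.Connected) {c : V → ℝ} (hc : ∑ u, c u = 0) :
    ∃ ψ, G.lapMatrix ℝ *ᵥ ψ = c := by
  obtain ⟨u₀⟩ := hconn.nonempty
  set L := (G.lapMatrix ℝ).toLin'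
  set σ := dotProductBilin ℝ ℝ (1 : V → ℝ)
  have hσ : ∀ v, σ v = ∑ u, v u := fun v => by simp [σ, dotProductBilin, dotProduct]
  have hrange : LinearMap.range L ≤ LinearMap.ker σ := by
    rintro _ ⟨ψ, rfl⟩
    show (1 : V → ℝ) ⬝ᵥ (G.lapMatrix ℝ *ᵥ ψ) = 0
    rw [dotProduct_lapMatrix_mulVec_comm, Pi.one_def, lapMatrix_mulVec_const_eq_zero,
      dotProduct_zero]
  have hker : Module.finrank ℝ (LinearMap.ker L) = 1 := by
    have := hconn.preconnected.subsingleton_connectedComponent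
    rw [← card_connectedComponent_eq_finrank_ker_toLin'_lapMatrix,
      Fintype.card_eq_one_iff]
    exact ⟨G.connectedComponentMk u₀, fun _ => Subsingleton.elim _ _⟩
  have hσtop : LinearMap.ker σ ≠ ⊤ := fun h => by
    have := LinearMap.mem_ker.mp (h ▸ Submodule.mem_top : Pi.single u₀ (1 : ℝ) ∈ LinearMap.ker σ)
    simp [hσ] at this
  have hlt := Submodule.finrank_lt hσtop
  have hrank := L.finrank_range_add_finrank_ker
  rw [hker] at hrank
  have heq : LinearMap.range L = LinearMap.ker σ :=
    Submodule.eq_of_le_of_finrank_le hrange (by omega)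
  obtain ⟨ψ, hψ⟩ : c ∈ LinearMap.range L := heq ▸ LinearMap.mem_ker.mpr ((hσ c).trans hc)
  exact ⟨ψ, hψ⟩

end Laplacian

section HittingTime

variable {V : Type*} [Fintype V] {G : SimpleGraph V} {y : V}

lemma hitMat_nonneg (u v : V) : 0 ≤ hitMat G y u v := by
  unfold hitMat
  simp only [of_apply]
  split_ifs <;> simp [degR_eq_degree_s6]

lemma sum_hitMat_le_one (u : V) : ∑ v, hitMat G y u v ≤ 1 := by
  calc ∑ v, hitMat G y u v ≤ ∑ v, if G.Adj u v then (degR G u)⁻¹ else 0 :=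
        sum_le_sum fun v _ => by
          unfold hitMat; simp only [of_apply]; split_ifs <;> simp [degR_eq_degree_s6]
    _ = degR G u * (degR G u)⁻¹ := by rw [← sum_filter, sum_const, nsmul_eq_mul, degR]
    _ ≤ 1 := mul_inv_le_one

lemma hitMat_mulVec_update (h : V → ℝ) (a : ℝ) :
    hitMat G y *ᵥ Function.update h y a = hitMat G y *ᵥ h := by
  funext u
  refine sum_congr rfl fun v _ => ?_
  rcases eq_or_ne v y with rfl | hv
  · simp [hitMat]
  · rw [Function.update_of_ne hv]

lemma hitMat_mulVec_apply {h : V → ℝ} (hy : h y = 0) (u : V) :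
    (hitMat G y *ᵥ h) u = (degR G u)⁻¹ * ∑ v ∈ G.neighborFinset u, h v := by
  rw [neighborFinset_eq_filter, sum_filter, mul_sum]
  refine sum_congr rfl fun v _ => ?_
  rcases eq_or_ne v y with rfl | hv
  · simp [hitMat, hy]
  · simp [hitMat, hv]

theorem hitting_eq_of_lapMatrix_mulVec (hconn : G.Connected) {h : V → ℝ} (hy : h y = 0)
    (hL : ∀ u, u ≠ y → (G.lapMatrix ℝ *ᵥ h) u = degR G u) (x : V) :
    hitting G x y = h x := by
  rcases eq_or_ne x y with rfl | hxy
  · rw [hitting, if_pos rfl, hy]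
  -- the equation `h = 1 + P h` fails at `y`, where the value of `h` is irrelevant to `P h`
  set h' := Function.update h y (1 + (hitMat G y *ᵥ h) y)
  have hfix : h' = 1 + hitMat G y *ᵥ h' := by
    rw [hitMat_mulVec_update]
    funext u
    rcases eq_or_ne u y with rfl | hu
    · simp [h']
    have hdeg : 0 < degR G u := by
      rw [degR_eq_degree_s6]; exact_mod_cast (hconn u y).degree_pos_left hu
    have hLu := hL u hu
    rw [lapMatrix_mulVec_apply, ← degR_eq_degree_s6] at hLu
    simp only [h', Function.update_of_ne hu, Pi.add_apply, Pi.one_apply, hitMat_mulVec_apply hy]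
    field_simp
    linarith
  have hsum := hasSum_sum_pow_apply_of_eq_one_add_mulVec hitMat_nonneg sum_hitMat_le_one hfix x
  rw [hitting, if_neg hxy, hsum.tsum_eq]
  exact Function.update_of_ne hxy _ _

end HittingTime

section Green

variable {V : Type*} [Fintype V] {G : SimpleGraph V}

lemma exists_green (hconn : G.Connected) (y : V) :
    ∃ g : V → V → ℝ, (∀ a, G.lapMatrix ℝ *ᵥ g a = Pi.single a 1 - Pi.single y 1) ∧
      ∀ a, g a y = 0 := by
  have : ∀ a, ∃ ψ : V → ℝ, G.lapMatrix ℝ *ᵥ ψ = Pi.single a 1 - Pi.single y 1 ∧ ψ y = 0 := by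
    intro a
    obtain ⟨ψ, hψ⟩ := exists_lapMatrix_mulVec_eq hconn (c := Pi.single a 1 - Pi.single y 1)
      (by simp [sum_sub_distrib])
    refine ⟨ψ - ψ y • 1, ?_, by simp⟩
    rw [mulVec_sub, mulVec_smul, Pi.one_def, lapMatrix_mulVec_const_eq_zero, hψ, smul_zero,
      sub_zero]
  choose g hg hgy using this
  exact ⟨g, hg, hgy⟩

variable {y : V} {g : V → V → ℝ} (hg : ∀ a, G.lapMatrix ℝ *ᵥ g a = Pi.single a 1 - Pi.single y 1)
include hg

lemma eres_eq_green (a b : V) : eres G a b = g a a - g b a - g a b + g b b := by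
  rw [eres_eq_sub (ψ := g a - g b) (by rw [mulVec_sub, hg, hg]; abel)]
  simp only [Pi.sub_apply]; ring

lemma green_comm (hgy : ∀ a, g a y = 0) (a b : V) : g a b = g b a := by
  have key : ∀ a b, (Pi.single b 1 - Pi.single y 1) ⬝ᵥ g a = g a b := fun a b => by
    simp [sub_dotProduct, hgy]
  rw [← key, ← hg, dotProduct_comm, dotProduct_lapMatrix_mulVec_comm, hg, dotProduct_comm, key]

lemma hitting_eq_sum_degR_mul_green (hconn : G.Connected) (hgy : ∀ a, g a y = 0) (x : V) :
    hitting G x y = ∑ a, degR G a * g a x := by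
  have hL : G.lapMatrix ℝ *ᵥ ∑ a, degR G a • g a
      = ∑ a, degR G a • (Pi.single a 1 - Pi.single y 1) := by
    simp_rw [mulVec_sum, mulVec_smul, hg]
  rw [hitting_eq_of_lapMatrix_mulVec hconn (h := ∑ a, degR G a • g a) (by simp [hgy])
    (fun u hu => by simp [hL, hu, Pi.single_apply]) x]
  simp

end Green

/-- For a connected graph `G` with `m` edges and `x, y ∈ V(G)`,
`H_{xy} = ½ Σ_z deg(z)(r(x,y)+r(z,y)−r(z,x)) = m·r(x,y) + ½(R^w(y)−R^w(x))`. -/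
theorem hitting_formula [Fintype V] (G : SimpleGraph V) (hconn : G.Connected)
    (m : ℕ) (hm : esize G = m) (x y : V) :
    hitting G x y = (1/2) * ∑ z, degR G z * (eres G x y + eres G z y - eres G z x) ∧
    hitting G x y = (m : ℝ) * eres G x y + (1/2) * (Rw G y - Rw G x) := by
  obtain ⟨g, hg, hgy⟩ := exists_green hconn y
  have hyg : ∀ b, g y b = 0 := fun b => (green_comm hg hgy y b).trans (hgy b)
  have hpot : ∀ z, eres G x y + eres G z y - eres G z x = 2 * g z x := fun z => by
    simp only [eres_eq_green hg, hgy, hyg, green_comm hg hgy x z]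
    ring
  have hRw : ∀ a, Rw G a = ∑ z, degR G z * eres G z a :=
    fun a => sum_congr rfl fun z _ => by rw [eres_comm]
  have hhit : hitting G x y = (1/2) * ∑ z, degR G z * (eres G x y + eres G z y - eres G z x) := by
    simp_rw [hpot, hitting_eq_sum_degR_mul_green hg hconn hgy, mul_sum]
    exact sum_congr rfl fun z _ => by ring
  refine ⟨hhit, hhit.trans ?_⟩
  simp_rw [mul_sub, mul_add, sum_sub_distrib, sum_add_distrib, ← sum_mul, sum_degR, hm, hRw]
  ring
end
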